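/- arXiv:2403.14189 — 4 statements merged into one kernel-verified Lean document; each statement's English description precedes it below -/
import Mathlib

section
/- For any x' ≥ x ≥ 0 and a ∈ ℝ, σ² > 0, and any x̄ > 0, the tail integral S(x̄, x) = ∫_{x̄}^{∞} [exp(-(v - a x)²/(2σ²)) + exp(-(v + a x)²/(2σ²))] dv satisfies ∂S/∂x ≥ 0, i.e., S(x̄, ·) is non-decreasing on [0, ∞). -/
open MeasureTheory Real Set

/-- The Gaussian kernel. -/
noncomputable def gK (σ2 u : ℝ) : ℝ := Real.exp (-u ^ 2 / (2 * σ2))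

lemma gK_integrable {σ2 : ℝ} (hσ : 0 < σ2) : Integrable (gK σ2) := by
  have h : gK σ2 = fun u => Real.exp (-(1 / (2 * σ2)) * u ^ 2) := by
    funext u; unfold gK; ring_nf
  rw [h]
  exact integrable_exp_neg_mul_sq (by positivity)

lemma gK_even {σ2 : ℝ} (u : ℝ) : gK σ2 (-u) = gK σ2 u := by
  unfold gK; ring_nf

/-- Translation of a Gaussian tail integral. -/
lemma shift_Ioi {σ2 : ℝ} (hσ : 0 < σ2) (c s : ℝ) :
    (∫ v in Set.Ioi c, gK σ2 (v - s)) = ∫ u in Set.Ioi (c - s), gK σ2 u := by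
  rw [← integral_indicator measurableSet_Ioi, ← integral_indicator measurableSet_Ioi,
    ← integral_sub_right_eq_self (fun u => (Set.Ioi (c - s)).indicator (gK σ2) u) s]
  congr 1
  funext v
  by_cases h : v ∈ Set.Ioi c
  · rw [Set.indicator_of_mem h, Set.indicator_of_mem]
    simp only [mem_Ioi] at h ⊢; linarith
  · rw [Set.indicator_of_notMem h, Set.indicator_of_notMem]
    simp only [mem_Ioi] at h ⊢; linarith

/-- Splitting a tail integral at an intermediate point. -/
lemma tail_split {σ2 : ℝ} (hσ : 0 < σ2) {t₁ t₂ : ℝ} (h : t₁ ≤ t₂) :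
    (∫ v in Set.Ioi t₁, gK σ2 v) =
      (∫ v in t₁..t₂, gK σ2 v) + ∫ v in Set.Ioi t₂, gK σ2 v := by
  have hint := gK_integrable hσ
  rw [intervalIntegral.integral_of_le h, ← setIntegral_union _ measurableSet_Ioi
    hint.integrableOn hint.integrableOn, Set.Ioc_union_Ioi_eq_Ioi h]
  exact Set.Ioc_disjoint_Ioi le_rfl

/-- Main monotonicity lemma in the shift parameter. -/
lemma folded_mono {σ2 : ℝ} (hσ : 0 < σ2) {xbar : ℝ} (hxbar : 0 < xbar)
    {s₁ s₂ : ℝ} (hs₁ : 0 ≤ s₁) (hs : s₁ ≤ s₂) :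
    (∫ v in Set.Ioi xbar, (gK σ2 (v - s₁) + gK σ2 (v + s₁))) ≤
      ∫ v in Set.Ioi xbar, (gK σ2 (v - s₂) + gK σ2 (v + s₂)) := by
  have hint := gK_integrable hσ
  have hsplit : ∀ s : ℝ, (∫ v in Set.Ioi xbar, (gK σ2 (v - s) + gK σ2 (v + s))) =
      (∫ v in Set.Ioi (xbar - s), gK σ2 v) + ∫ v in Set.Ioi (xbar + s), gK σ2 v := by
    intro s
    rw [integral_add ((hint.comp_sub_right s).integrableOn)
      ((hint.comp_add_right s).integrableOn), shift_Ioi hσ]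
    congr 1
    have : (∫ v in Set.Ioi xbar, gK σ2 (v + s)) = ∫ v in Set.Ioi xbar, gK σ2 (v - (-s)) := by
      congr 1; funext v; rw [sub_neg_eq_add]
    rw [this, shift_Ioi hσ, sub_neg_eq_add]
  rw [hsplit, hsplit]
  -- split the tails
  have h1 : xbar - s₂ ≤ xbar - s₁ := by linarith
  have h2 : xbar + s₁ ≤ xbar + s₂ := by linarith
  rw [tail_split hσ h1, tail_split hσ h2]
  have key : (∫ v in (xbar + s₁)..(xbar + s₂), gK σ2 v) ≤
      ∫ v in (xbar - s₂)..(xbar - s₁), gK σ2 v := by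
    have hA : (∫ v in (xbar - s₂)..(xbar - s₁), gK σ2 v) =
        ∫ v in (s₁ - xbar)..(s₂ - xbar), gK σ2 v := by
      have := intervalIntegral.integral_comp_neg (a := s₁ - xbar) (b := s₂ - xbar) (gK σ2)
      simp only [gK_even] at this
      rw [this]; congr 1 <;> ring
    have hB : (∫ v in (xbar + s₁)..(xbar + s₂), gK σ2 v) =
        ∫ v in (s₁ - xbar)..(s₂ - xbar), gK σ2 (v + 2 * xbar) := by
      rw [intervalIntegral.integral_comp_add_right (gK σ2) (2 * xbar)]
      congr 1 <;> ring
    rw [hA, hB]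
    have hI1 : IntervalIntegrable (fun v => gK σ2 (v + 2 * xbar)) volume
        (s₁ - xbar) (s₂ - xbar) := (hint.comp_add_right (2 * xbar)).intervalIntegrable
    have hI2 : IntervalIntegrable (gK σ2) volume (s₁ - xbar) (s₂ - xbar) :=
      hint.intervalIntegrable
    refine intervalIntegral.integral_mono_on (by linarith) hI1 hI2 ?_
    intro u hu
    obtain ⟨hu1, hu2⟩ := hu
    unfold gK
    apply Real.exp_le_exp.2
    have hmono : -(u + 2 * xbar) ^ 2 ≤ -u ^ 2 := by nlinarith
    gcongr
  linarith [key]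

/-- The tail integral of the folded Gaussian kernel is non-decreasing in `x` on `[0, ∞)`. -/
theorem stmt_0 (a σ2 : ℝ) (hσ : 0 < σ2) (xbar : ℝ) (hxbar : 0 < xbar)
    (x x' : ℝ) (hx : 0 ≤ x) (hxx' : x ≤ x') :
    ∫ v in Set.Ioi xbar,
        (Real.exp (-(v - a * x) ^ 2 / (2 * σ2)) + Real.exp (-(v + a * x) ^ 2 / (2 * σ2)))
      ≤ ∫ v in Set.Ioi xbar,
        (Real.exp (-(v - a * x') ^ 2 / (2 * σ2)) + Real.exp (-(v + a * x') ^ 2 / (2 * σ2))) := by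
  have hpt : ∀ (t v : ℝ),
      Real.exp (-(v - a * t) ^ 2 / (2 * σ2)) + Real.exp (-(v + a * t) ^ 2 / (2 * σ2))
        = gK σ2 (v - |a| * t) + gK σ2 (v + |a| * t) := by
    intro t v
    rcases abs_cases a with ⟨h, _⟩ | ⟨h, _⟩ <;> rw [h] <;> unfold gK <;> ring_nf
  have h1 : (∫ v in Set.Ioi xbar,
      (Real.exp (-(v - a * x) ^ 2 / (2 * σ2)) + Real.exp (-(v + a * x) ^ 2 / (2 * σ2))))
      = ∫ v in Set.Ioi xbar, (gK σ2 (v - |a| * x) + gK σ2 (v + |a| * x)) := by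
    congr 1; funext v; exact hpt x v
  have h2 : (∫ v in Set.Ioi xbar,
      (Real.exp (-(v - a * x') ^ 2 / (2 * σ2)) + Real.exp (-(v + a * x') ^ 2 / (2 * σ2))))
      = ∫ v in Set.Ioi xbar, (gK σ2 (v - |a| * x') + gK σ2 (v + |a| * x')) := by
    congr 1; funext v; exact hpt x' v
  rw [h1, h2]
  exact folded_mono hσ hxbar (by positivity)
    (mul_le_mul_of_nonneg_left hxx' (abs_nonneg a))
end

section
/- Let f : [0, ∞) → [0, ∞) be a non-decreasing measurable function such that all integrals below are finite. Then for any 0 ≤ x ≤ x', ∫_0^∞ [exp(-(v - a x')²/(2σ²)) + exp(-(v + a x')²/(2σ²))] f(v) dv ≥ ∫_0^∞ [exp(-(v - a x)²/(2σ²)) + exp(-(v + a x)²/(2σ²))] f(v) dv. -/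
open MeasureTheory Real Set

lemma gauss_int (σ2 : ℝ) (hσ : 0 < σ2) (c : ℝ) :
    IntegrableOn (fun v => Real.exp (-(v - c) ^ 2 / (2 * σ2))) (Ioi 0) := by
  have h : Integrable (fun v : ℝ => Real.exp (-(1/(2*σ2)) * v ^ 2)) :=
    integrable_exp_neg_mul_sq (by positivity)
  have h2 := h.comp_sub_right c
  have h3 : (fun v : ℝ => Real.exp (-(1/(2*σ2)) * (v - c) ^ 2))
      = fun v => Real.exp (-(v - c) ^ 2 / (2 * σ2)) := by
    funext v; congr 1; field_simp
  rw [h3] at h2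
  exact h2.integrableOn

lemma gauss_mass (σ2 : ℝ) (hσ : 0 < σ2) (c : ℝ) :
    ∫ v in Ioi (0:ℝ), (Real.exp (-(v - c) ^ 2 / (2 * σ2)) + Real.exp (-(v + c) ^ 2 / (2 * σ2)))
      = ∫ v : ℝ, Real.exp (-v ^ 2 / (2 * σ2)) := by
  have h1 := gauss_int σ2 hσ c
  have h2 : IntegrableOn (fun v => Real.exp (-(v + c) ^ 2 / (2 * σ2))) (Ioi (0:ℝ)) := by
    have := gauss_int σ2 hσ (-c)
    simpa [sub_neg_eq_add] using this
  rw [integral_add h1 h2]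
  have h3 : ∫ v in Ioi (0:ℝ), Real.exp (-(v + c) ^ 2 / (2 * σ2))
      = ∫ v in Iic (0:ℝ), Real.exp (-(v - c) ^ 2 / (2 * σ2)) := by
    have := integral_comp_neg_Ioi (0:ℝ) (fun v => Real.exp (-(v - c) ^ 2 / (2 * σ2)))
    rw [neg_zero] at this
    rw [← this]
    congr 1; funext v; congr 2; ring
  rw [h3, add_comm]
  have h4 : IntegrableOn (fun v => Real.exp (-(v - c) ^ 2 / (2 * σ2))) (Iic (0:ℝ)) := by
    have h : Integrable (fun v : ℝ => Real.exp (-(1/(2*σ2)) * v ^ 2)) :=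
      integrable_exp_neg_mul_sq (by positivity)
    have h2 := h.comp_sub_right c
    have h3 : (fun v : ℝ => Real.exp (-(1/(2*σ2)) * (v - c) ^ 2))
        = fun v => Real.exp (-(v - c) ^ 2 / (2 * σ2)) := by
      funext v; congr 1; field_simp
    rw [h3] at h2
    exact h2.integrableOn
  rw [intervalIntegral.integral_Iic_add_Ioi h4 h1]
  rw [← integral_sub_right_eq_self (fun v => Real.exp (-v ^ 2 / (2 * σ2))) c]
lemma cosh_fact (σ2 : ℝ) (hσ : 0 < σ2) (c v : ℝ) :
    Real.exp (-(v - c) ^ 2 / (2 * σ2)) + Real.exp (-(v + c) ^ 2 / (2 * σ2))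
      = 2 * Real.exp (-v ^ 2 / (2 * σ2)) * (Real.exp (-c ^ 2 / (2 * σ2)) * Real.cosh (v * c / σ2)) := by
  rw [Real.cosh_eq]
  have e1 : -(v - c) ^ 2 / (2 * σ2) = -v ^ 2 / (2 * σ2) + (-c ^ 2 / (2 * σ2) + v * c / σ2) := by
    field_simp; ring
  have e2 : -(v + c) ^ 2 / (2 * σ2) = -v ^ 2 / (2 * σ2) + (-c ^ 2 / (2 * σ2) + -(v * c / σ2)) := by
    field_simp; ring
  rw [e1, e2, Real.exp_add, Real.exp_add, Real.exp_add, Real.exp_add]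
  ring

lemma upper_set (σ2 : ℝ) (hσ : 0 < σ2) (β β' v w : ℝ) (hβ : 0 ≤ β) (hββ' : β ≤ β')
    (hv : 0 ≤ v) (hvw : v ≤ w)
    (h : Real.exp (-β ^ 2 / (2 * σ2)) * Real.cosh (v * β / σ2)
        ≤ Real.exp (-β' ^ 2 / (2 * σ2)) * Real.cosh (v * β' / σ2)) :
    Real.exp (-β ^ 2 / (2 * σ2)) * Real.cosh (w * β / σ2)
        ≤ Real.exp (-β' ^ 2 / (2 * σ2)) * Real.cosh (w * β' / σ2) := by
  have hw : 0 ≤ w := hv.trans hvw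
  have hβ' : 0 ≤ β' := hβ.trans hββ'
  have key : Real.cosh (w * β / σ2) * Real.cosh (v * β' / σ2)
      ≤ Real.cosh (w * β' / σ2) * Real.cosh (v * β / σ2) := by
    have prod : ∀ X Y : ℝ, Real.cosh X * Real.cosh Y = (Real.cosh (X + Y) + Real.cosh (X - Y)) / 2 := by
      intro X Y
      rw [Real.cosh_add, Real.cosh_sub]
      ring
    rw [prod, prod]
    have h1 : Real.cosh (w * β / σ2 + v * β' / σ2) ≤ Real.cosh (w * β' / σ2 + v * β / σ2) := by
      rw [Real.cosh_le_cosh]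
      rw [abs_of_nonneg (by positivity), abs_of_nonneg (by positivity)]
      rw [← add_div, ← add_div, div_le_div_iff_of_pos_right hσ]
      nlinarith
    have h2 : Real.cosh (w * β / σ2 - v * β' / σ2) ≤ Real.cosh (w * β' / σ2 - v * β / σ2) := by
      rw [Real.cosh_le_cosh]
      rw [abs_le]
      have hr : 0 ≤ w * β' / σ2 - v * β / σ2 := by
        rw [sub_nonneg, div_le_div_iff_of_pos_right hσ]
        nlinarith
      rw [abs_of_nonneg hr]
      rw [div_sub_div_same, div_sub_div_same]
      constructor
      · rw [← neg_div, div_le_div_iff_of_pos_right hσ]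
        nlinarith
      · rw [div_le_div_iff_of_pos_right hσ]
        nlinarith
    linarith
  have hcv : 0 < Real.cosh (v * β / σ2) := Real.cosh_pos _
  have hE' : 0 < Real.exp (-β' ^ 2 / (2 * σ2)) := Real.exp_pos _
  have hE : 0 < Real.exp (-β ^ 2 / (2 * σ2)) := Real.exp_pos _
  have c1 : Real.exp (-β ^ 2 / (2 * σ2)) * Real.cosh (w * β / σ2) * Real.cosh (v * β / σ2)
      ≤ Real.exp (-β' ^ 2 / (2 * σ2)) * Real.cosh (w * β' / σ2) * Real.cosh (v * β / σ2) := by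
    calc Real.exp (-β ^ 2 / (2 * σ2)) * Real.cosh (w * β / σ2) * Real.cosh (v * β / σ2)
        ≤ Real.cosh (w * β / σ2) * (Real.exp (-β' ^ 2 / (2 * σ2)) * Real.cosh (v * β' / σ2)) := by
          nlinarith [Real.cosh_pos (w * β / σ2)]
      _ ≤ Real.exp (-β' ^ 2 / (2 * σ2)) * Real.cosh (w * β' / σ2) * Real.cosh (v * β / σ2) := by
          nlinarith
  exact le_of_mul_le_mul_right c1 hcv

lemma crossing_exists (σ2 β β' : ℝ) (hσ : 0 < σ2) (hβ : 0 ≤ β) (hββ' : β < β') :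
    ∃ v : ℝ, 0 ≤ v ∧ Real.exp (-β ^ 2 / (2 * σ2)) * Real.cosh (v * β / σ2)
        ≤ Real.exp (-β' ^ 2 / (2 * σ2)) * Real.cosh (v * β' / σ2) := by
  set A := Real.exp (-β ^ 2 / (2 * σ2)) with hA
  set A' := Real.exp (-β' ^ 2 / (2 * σ2)) with hA'
  have hApos : 0 < A := Real.exp_pos _
  have hA'pos : 0 < A' := Real.exp_pos _
  set m := max 0 (2 * A / A' - 1) with hm
  have hm0 : 0 ≤ m := le_max_left _ _
  have hd : 0 < β' - β := sub_pos.mpr hββ'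
  refine ⟨σ2 * m / (β' - β), by positivity, ?_⟩
  set v := σ2 * m / (β' - β) with hv
  have hv0 : 0 ≤ v := by positivity
  set t := v * β / σ2 with ht
  set t' := v * β' / σ2 with ht'
  have ht0 : 0 ≤ t := by positivity
  have htt' : t' = t + m := by
    rw [ht', ht, hv]
    field_simp
    ring
  have h1 : Real.cosh t ≤ Real.exp t := by
    rw [Real.cosh_eq]
    have : Real.exp (-t) ≤ Real.exp t := Real.exp_le_exp.mpr (by linarith)
    linarith
  have h2 : Real.exp t' / 2 ≤ Real.cosh t' := by
    rw [Real.cosh_eq]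
    have := Real.exp_pos (-t')
    linarith
  have h3 : 2 * A ≤ A' * Real.exp m := by
    have hle : 2 * A / A' - 1 ≤ m := le_max_right _ _
    have he := Real.add_one_le_exp m
    have : 2 * A / A' ≤ Real.exp m := by linarith
    rw [div_le_iff₀ hA'pos] at this
    linarith
  have he' : Real.exp t' = Real.exp m * Real.exp t := by
    rw [← Real.exp_add]; congr 1; linarith
  have h4 : A * Real.exp t ≤ A' * Real.exp t' / 2 := by
    rw [he']
    nlinarith [Real.exp_pos t]
  calc A * Real.cosh t ≤ A * Real.exp t := by nlinarith
    _ ≤ A' * Real.exp t' / 2 := h4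
    _ ≤ A' * Real.cosh t' := by nlinarith

/-- Folded-Gaussian expectations of a non-decreasing function are non-decreasing in `x`. -/
theorem stmt_1 (a σ2 : ℝ) (hσ : 0 < σ2) (f : ℝ → ℝ)
    (hf_meas : Measurable f) (hf_nonneg : ∀ v, 0 ≤ v → 0 ≤ f v)
    (hf_mono : MonotoneOn f (Set.Ici 0))
    (hint : ∀ s : ℝ, IntegrableOn
      (fun v => (Real.exp (-(v - a * s) ^ 2 / (2 * σ2)) + Real.exp (-(v + a * s) ^ 2 / (2 * σ2))) * f v)
      (Set.Ioi 0))
    (x x' : ℝ) (hx : 0 ≤ x) (hxx' : x ≤ x') :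
    ∫ v in Set.Ioi (0:ℝ),
        (Real.exp (-(v - a * x) ^ 2 / (2 * σ2)) + Real.exp (-(v + a * x) ^ 2 / (2 * σ2))) * f v
      ≤ ∫ v in Set.Ioi (0:ℝ),
        (Real.exp (-(v - a * x') ^ 2 / (2 * σ2)) + Real.exp (-(v + a * x') ^ 2 / (2 * σ2))) * f v := by
  have hx' : 0 ≤ x' := hx.trans hxx'
  set β : ℝ := |a * x| with hβdef
  set β' : ℝ := |a * x'| with hβ'def
  have hβ0 : (0:ℝ) ≤ β := abs_nonneg _
  have hββ' : β ≤ β' := by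
    rw [hβdef, hβ'def, abs_mul, abs_mul, abs_of_nonneg hx, abs_of_nonneg hx']
    exact mul_le_mul_of_nonneg_left hxx' (abs_nonneg a)
  rcases eq_or_lt_of_le hββ' with heq | hlt
  · -- trivial case: a * x = a * x'
    have hax : a * x = a * x' := by
      rcases eq_or_ne a 0 with h0 | h0
      · simp [h0]
      · rw [hβdef, hβ'def, abs_mul, abs_mul, abs_of_nonneg hx, abs_of_nonneg hx'] at heq
        have hxe : x = x' := mul_left_cancel₀ (abs_ne_zero.mpr h0) heq
        rw [hxe]
    rw [hax]
  -- main case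
  set g : ℝ → ℝ := fun v =>
    Real.exp (-(v - a * x) ^ 2 / (2 * σ2)) + Real.exp (-(v + a * x) ^ 2 / (2 * σ2)) with hgdef
  set g' : ℝ → ℝ := fun v =>
    Real.exp (-(v - a * x') ^ 2 / (2 * σ2)) + Real.exp (-(v + a * x') ^ 2 / (2 * σ2)) with hg'def
  set φ : ℝ → ℝ := fun v =>
    Real.exp (-β' ^ 2 / (2 * σ2)) * Real.cosh (v * β' / σ2)
      - Real.exp (-β ^ 2 / (2 * σ2)) * Real.cosh (v * β / σ2) with hφdef
  -- factorization
  have hfact : ∀ c : ℝ, ∀ v : ℝ, 0 ≤ v →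
      Real.exp (-(v - c) ^ 2 / (2 * σ2)) + Real.exp (-(v + c) ^ 2 / (2 * σ2))
        = 2 * Real.exp (-v ^ 2 / (2 * σ2)) * (Real.exp (-|c| ^ 2 / (2 * σ2)) * Real.cosh (v * |c| / σ2)) := by
    intro c v hv
    rw [cosh_fact σ2 hσ c v, sq_abs]
    congr 2
    rw [← Real.cosh_abs (v * c / σ2), abs_div, abs_mul, abs_of_nonneg hv, abs_of_pos hσ]
  have hDfact : ∀ v : ℝ, 0 ≤ v → g' v - g v = 2 * Real.exp (-v ^ 2 / (2 * σ2)) * φ v := by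
    intro v hv
    rw [hgdef, hg'def, hφdef]
    simp only
    rw [hfact (a * x) v hv, hfact (a * x') v hv, ← hβdef, ← hβ'def]
    ring
  -- the crossing set
  set S : Set ℝ := {v : ℝ | 0 ≤ v ∧ 0 ≤ φ v} with hSdef
  have hSne : S.Nonempty := by
    obtain ⟨v, hv0, hv⟩ := crossing_exists σ2 β β' hσ hβ0 hlt
    exact ⟨v, hv0, by rw [hφdef]; simp only; linarith⟩
  have hSbdd : BddBelow S := ⟨0, fun v hv => hv.1⟩
  set v₀ : ℝ := sInf S with hv₀def
  have hv₀0 : 0 ≤ v₀ := le_csInf hSne fun v hv => hv.1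
  -- pointwise sign
  have hpt : ∀ v ∈ Ioi (0:ℝ), 0 ≤ (g' v - g v) * (f v - f v₀) := by
    intro v hv
    have hv0 : 0 ≤ v := le_of_lt hv
    rcases lt_trichotomy v v₀ with h | h | h
    · have hvS : v ∉ S := fun hvS => absurd (csInf_le hSbdd hvS) (not_le.mpr h)
      have hφv : φ v < 0 := by
        by_contra hc
        exact hvS ⟨hv0, le_of_not_gt hc⟩
      have hD : g' v - g v ≤ 0 := by
        rw [hDfact v hv0]
        have he := Real.exp_pos (-v ^ 2 / (2 * σ2))
        nlinarith [mul_pos he (neg_pos.mpr hφv)]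
      have hfv : f v ≤ f v₀ := hf_mono hv0 hv₀0 h.le
      have hfd : f v - f v₀ ≤ 0 := by linarith
      nlinarith [mul_nonneg (neg_nonneg.mpr hD) (neg_nonneg.mpr hfd)]
    · rw [h]; simp
    · obtain ⟨w, hwS, hwv⟩ := exists_lt_of_csInf_lt hSne h
      have hφv : 0 ≤ φ v := by
        have := upper_set σ2 hσ β β' w v hβ0 hββ' hwS.1 hwv.le (by
          have := hwS.2; rw [hφdef] at this; simp only at this; linarith)
        rw [hφdef]; simp only; linarith
      have hD : 0 ≤ g' v - g v := by
        rw [hDfact v hv0]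
        positivity
      have hfv : f v₀ ≤ f v := hf_mono hv₀0 hv0 h.le
      exact mul_nonneg hD (by linarith)
  -- integrability
  have hIg : IntegrableOn g (Ioi (0:ℝ)) := by
    apply (gauss_int σ2 hσ (a * x)).add
    have := gauss_int σ2 hσ (-(a * x))
    simpa [sub_neg_eq_add] using this
  have hIg' : IntegrableOn g' (Ioi (0:ℝ)) := by
    apply (gauss_int σ2 hσ (a * x')).add
    have := gauss_int σ2 hσ (-(a * x'))
    simpa [sub_neg_eq_add] using this
  have hIDf : IntegrableOn (fun v => (g' v - g v) * f v) (Ioi (0:ℝ)) := by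
    have : (fun v => (g' v - g v) * f v) = fun v => g' v * f v - g v * f v := by
      funext v; ring
    rw [this]
    exact (hint x').sub (hint x)
  have hIDc : IntegrableOn (fun v => (g' v - g v) * f v₀) (Ioi (0:ℝ)) :=
    (hIg'.sub hIg).mul_const _
  -- zero total mass of the difference
  have hD0 : ∫ v in Ioi (0:ℝ), (g' v - g v) = 0 := by
    rw [integral_sub hIg' hIg, hg'def, hgdef]
    rw [gauss_mass σ2 hσ (a * x'), gauss_mass σ2 hσ (a * x), sub_self]
  -- conclusion
  have hkey : 0 ≤ ∫ v in Ioi (0:ℝ), (g' v - g v) * (f v - f v₀) :=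
    setIntegral_nonneg measurableSet_Ioi hpt
  have hsplit : ∫ v in Ioi (0:ℝ), (g' v - g v) * (f v - f v₀)
      = (∫ v in Ioi (0:ℝ), (g' v - g v) * f v) - ∫ v in Ioi (0:ℝ), (g' v - g v) * f v₀ := by
    rw [← integral_sub hIDf hIDc]
    congr 1; funext v; ring
  have hc0 : ∫ v in Ioi (0:ℝ), (g' v - g v) * f v₀ = 0 := by
    rw [integral_mul_const, hD0, zero_mul]
  have hfin : ∫ v in Ioi (0:ℝ), (g' v - g v) * f v
      = (∫ v in Ioi (0:ℝ), g' v * f v) - ∫ v in Ioi (0:ℝ), g v * f v := by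
    have : (fun v => (g' v - g v) * f v) = fun v => g' v * f v - g v * f v := by
      funext v; ring
    rw [this, integral_sub (hint x') (hint x)]
  rw [hsplit, hc0, hfin] at hkey
  linarith
end

section
/- Let V : ℝ₊ → ℝ₊ be non-decreasing and integrable against the folded Gaussian kernels below. Define F(x) = ∫_0^∞ [exp(-(v - a x)²/(2σ²)) + exp(-(v + a x)²/(2σ²))] V(v) dv for x ≥ 0. Then G(x) = x² + β[C − (1−p) F(x)] − (x² + β D) = β C − β(1−p) F(x) − β D is non-increasing in x for any constants C, D and p ∈ [0,1], β ∈ (0,1). In particular, the difference of two Bellman Q-values differing only by a term −(1−p)F(x) plus constants is non-increasing in x. -/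
open MeasureTheory Set

/-- Core lemma: for an even, non-negative kernel `g` that is non-increasing in `|·|`,
and a non-negative non-decreasing `W` vanishing on `(-∞,0]`, the folded expectation
`∫ (g (v - m) + g (v + m)) * W v` is non-decreasing in `m ≥ 0`. -/
lemma folded_mono_aux (g W : ℝ → ℝ)
    (hg_even : ∀ t, g (-t) = g t)
    (hg_anti : ∀ s t : ℝ, |s| ≤ |t| → g t ≤ g s)
    (hg_nonneg : ∀ t, 0 ≤ g t)
    (hW_nonneg : ∀ v, 0 ≤ W v)
    (hW0 : ∀ v, v ≤ 0 → W v = 0)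
    (hW_mono : ∀ v w : ℝ, 0 ≤ v → v ≤ w → W v ≤ W w)
    (hmeas : ∀ α β' : ℝ, AEStronglyMeasurable (fun w => g (w + α) * W (w + β')) volume)
    {m1 m2 : ℝ} (hm1 : 0 ≤ m1) (hm : m1 ≤ m2)
    (h1 : Integrable (fun v => (g (v - m1) + g (v + m1)) * W v))
    (h2 : Integrable (fun v => (g (v - m2) + g (v + m2)) * W v)) :
    (∫ v, (g (v - m1) + g (v + m1)) * W v) ≤ ∫ v, (g (v - m2) + g (v + m2)) * W v := by
  set c := (m1 + m2) / 2 with hc_def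
  set d := (m2 - m1) / 2 with hd_def
  have hc : 0 ≤ c := by rw [hc_def]; linarith
  have hd : 0 ≤ d := by rw [hd_def]; linarith
  have hm2cd : m2 = c + d := by rw [hc_def, hd_def]; ring
  have hm1cd : m1 = c - d := by rw [hc_def, hd_def]; ring
  -- measurability of the basic pieces (as functions of v)
  have hmeas' : ∀ α : ℝ, AEStronglyMeasurable (fun v : ℝ => g (v + α) * W v) volume := by
    intro α
    simpa using hmeas α 0
  -- integrability of each of the four basic pieces
  have hpiece : ∀ m : ℝ, Integrable (fun v => (g (v - m) + g (v + m)) * W v) →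
      Integrable (fun v => g (v - m) * W v) ∧ Integrable (fun v => g (v + m) * W v) := by
    intro m hI
    constructor
    · refine hI.mono' (by simpa [sub_eq_add_neg] using hmeas' (-m)) ?_
      filter_upwards with v
      have h1' : 0 ≤ g (v - m) * W v := mul_nonneg (hg_nonneg _) (hW_nonneg _)
      rw [Real.norm_eq_abs, abs_of_nonneg h1']
      have : 0 ≤ g (v + m) * W v := mul_nonneg (hg_nonneg _) (hW_nonneg _)
      nlinarith
    · refine hI.mono' (hmeas' m) ?_
      filter_upwards with v
      have h1' : 0 ≤ g (v + m) * W v := mul_nonneg (hg_nonneg _) (hW_nonneg _)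
      rw [Real.norm_eq_abs, abs_of_nonneg h1']
      have : 0 ≤ g (v - m) * W v := mul_nonneg (hg_nonneg _) (hW_nonneg _)
      nlinarith
  obtain ⟨hA1, hB1⟩ := hpiece m1 h1
  obtain ⟨hA2, hB2⟩ := hpiece m2 h2
  -- translated pieces
  have hT1 : Integrable (fun w => g (w - d) * W (w + c)) := by
    refine (hA2.comp_add_right c).congr (Filter.Eventually.of_forall fun w => ?_)
    have h : w + c - m2 = w - d := by rw [hm2cd]; ring
    simp only [h]
  have hT2 : Integrable (fun w => g (w + d) * W (w - c)) := by
    refine (hB2.comp_add_right (-c)).congr (Filter.Eventually.of_forall fun w => ?_)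
    have h' : w + -c = w - c := by ring
    have h : w - c + m2 = w + d := by rw [hm2cd]; ring
    simp only [h', h]
  have hT3 : Integrable (fun w => g (w + d) * W (w + c)) := by
    refine (hA1.comp_add_right c).congr (Filter.Eventually.of_forall fun w => ?_)
    have h : w + c - m1 = w + d := by rw [hm1cd]; ring
    simp only [h]
  have hT4 : Integrable (fun w => g (w - d) * W (w - c)) := by
    refine (hB1.comp_add_right (-c)).congr (Filter.Eventually.of_forall fun w => ?_)
    have h' : w + -c = w - c := by ring
    have h : w - c + m1 = w - d := by rw [hm1cd]; ring
    simp only [h', h]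
  -- integral identities via translation invariance
  have hI_A2 : (∫ v, g (v - m2) * W v) = ∫ w, g (w - d) * W (w + c) := by
    rw [← integral_add_right_eq_self (fun v => g (v - m2) * W v) c]
    congr 1; funext w
    have h : w + c - m2 = w - d := by rw [hm2cd]; ring
    rw [h]
  have hI_B2 : (∫ v, g (v + m2) * W v) = ∫ w, g (w + d) * W (w - c) := by
    rw [← integral_add_right_eq_self (fun v => g (v + m2) * W v) (-c)]
    congr 1; funext w
    have h : w + -c + m2 = w + d := by rw [hm2cd]; ring
    have h' : w + -c = w - c := by ring
    rw [h, h']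
  have hI_A1 : (∫ v, g (v - m1) * W v) = ∫ w, g (w + d) * W (w + c) := by
    rw [← integral_add_right_eq_self (fun v => g (v - m1) * W v) c]
    congr 1; funext w
    have h : w + c - m1 = w + d := by rw [hm1cd]; ring
    rw [h]
  have hI_B1 : (∫ v, g (v + m1) * W v) = ∫ w, g (w - d) * W (w - c) := by
    rw [← integral_add_right_eq_self (fun v => g (v + m1) * W v) (-c)]
    congr 1; funext w
    have h : w + -c + m1 = w - d := by rw [hm1cd]; ring
    have h' : w + -c = w - c := by ring
    rw [h, h']
  -- split the two target integrals
  have hsplit : ∀ m : ℝ, Integrable (fun v => g (v - m) * W v) →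
      Integrable (fun v => g (v + m) * W v) →
      (∫ v, (g (v - m) + g (v + m)) * W v)
        = (∫ v, g (v - m) * W v) + ∫ v, g (v + m) * W v := by
    intro m hA hB
    rw [← integral_add hA hB]
    congr 1; funext v; ring
  rw [hsplit m1 hA1 hB1, hsplit m2 hA2 hB2, hI_A1, hI_B1, hI_A2, hI_B2]
  -- the symmetrized difference
  set P : ℝ → ℝ := fun w => (g (w - d) - g (w + d)) * (W (w + c) - W (w - c)) with hPdef
  have hPint : Integrable P := by
    refine ((hT1.add hT2).sub (hT3.add hT4)).congr (Filter.Eventually.of_forall fun w => ?_)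
    simp only [Pi.sub_apply, Pi.add_apply]; ring
  have hPeq : (∫ w, P w)
      = ((∫ w, g (w - d) * W (w + c)) + ∫ w, g (w + d) * W (w - c))
        - ((∫ w, g (w + d) * W (w + c)) + ∫ w, g (w - d) * W (w - c)) := by
    have e : (∫ w, P w)
        = ∫ w, ((g (w - d) * W (w + c) + g (w + d) * W (w - c))
            - (g (w + d) * W (w + c) + g (w - d) * W (w - c))) := by
      congr 1; funext w; simp only [hPdef]; ring
    have hS1 : Integrable (fun w => g (w - d) * W (w + c) + g (w + d) * W (w - c)) :=
      hT1.add hT2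
    have hS2 : Integrable (fun w => g (w + d) * W (w + c) + g (w - d) * W (w - c)) :=
      hT3.add hT4
    rw [e, integral_sub hS1 hS2, integral_add hT1 hT2, integral_add hT3 hT4]
  -- pointwise non-negativity of the folded integrand
  have hkey0 : ∀ w : ℝ, 0 ≤ w → 0 ≤ P w + P (-w) := by
    intro w hw
    have hg1 : g (-w - d) = g (w + d) := by
      rw [show -w - d = -(w + d) by ring, hg_even]
    have hg2 : g (-w + d) = g (w - d) := by
      rw [show -w + d = -(w - d) by ring, hg_even]
    have hform : P w + P (-w)
        = (g (w - d) - g (w + d)) * (W (w + c) - W (w - c) - W (-w + c) + W (-w - c)) := by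
      simp only [hPdef]; rw [hg1, hg2]; ring
    rw [hform]
    have hf1 : g (w + d) ≤ g (w - d) := by
      refine hg_anti _ _ ?_
      rw [abs_of_nonneg (by linarith : (0:ℝ) ≤ w + d)]
      exact abs_le.mpr ⟨by linarith, by linarith⟩
    have hWnc : W (-w - c) = 0 := hW0 _ (by linarith)
    have hf2 : 0 ≤ W (w + c) - W (w - c) - W (-w + c) + W (-w - c) := by
      rcases le_total w c with hwc | hwc
      · have hz : W (w - c) = 0 := hW0 _ (by linarith)
        have : W (-w + c) ≤ W (w + c) := hW_mono _ _ (by linarith) (by linarith)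
        rw [hz, hWnc]; linarith
      · have hz : W (-w + c) = 0 := hW0 _ (by linarith)
        have : W (w - c) ≤ W (w + c) := hW_mono _ _ (by linarith) (by linarith)
        rw [hz, hWnc]; linarith
    exact mul_nonneg (by linarith) hf2
  have hkey : ∀ w : ℝ, 0 ≤ P w + P (-w) := by
    intro w
    rcases le_total 0 w with h | h
    · exact hkey0 w h
    · have := hkey0 (-w) (by linarith)
      rw [neg_neg] at this; linarith
  have hPneg : (∫ w, P (-w)) = ∫ w, P w := integral_neg_eq_self P volume
  have hsum : 0 ≤ ∫ w, (P w + P (-w)) := integral_nonneg hkey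
  rw [integral_add hPint hPint.comp_neg, hPneg] at hsum
  have hPnn : 0 ≤ ∫ w, P w := by linarith
  rw [hPeq] at hPnn
  linarith

/-- A Q-value difference of the form `βC − β(1−p)F(x) − βD`, where `F` is the folded-Gaussian
expectation of a non-decreasing non-negative function `V`, is non-increasing in `x ≥ 0`. -/
theorem stmt_11 (a σ2 : ℝ) (hσ : 0 < σ2) (β p C D : ℝ) (hβ0 : 0 < β) (hβ1 : β < 1)
    (hp0 : 0 ≤ p) (hp1 : p ≤ 1)
    (V : ℝ → ℝ) (hV_meas : Measurable V) (hV_nonneg : ∀ v, 0 ≤ v → 0 ≤ V v)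
    (hV_mono : MonotoneOn V (Set.Ici 0))
    (hV_int : ∀ s : ℝ, IntegrableOn
      (fun v => (Real.exp (-(v - a * s) ^ 2 / (2 * σ2)) + Real.exp (-(v + a * s) ^ 2 / (2 * σ2))) * V v)
      (Set.Ioi 0)) :
    AntitoneOn (fun x =>
      β * C - β * (1 - p) *
        (∫ v in Set.Ioi (0:ℝ),
          (Real.exp (-(v - a * x) ^ 2 / (2 * σ2)) + Real.exp (-(v + a * x) ^ 2 / (2 * σ2))) * V v)
        - β * D) (Set.Ici 0) := by
  set g : ℝ → ℝ := fun t => Real.exp (-t ^ 2 / (2 * σ2)) with hgdef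
  set W : ℝ → ℝ := (Set.Ioi (0:ℝ)).indicator V with hWdef
  -- kernel with a replaced by |a|
  have hker : ∀ x v : ℝ,
      Real.exp (-(v - a * x) ^ 2 / (2 * σ2)) + Real.exp (-(v + a * x) ^ 2 / (2 * σ2))
        = g (v - |a| * x) + g (v + |a| * x) := by
    intro x v
    simp only [hgdef]
    rcases abs_cases a with ⟨h, _⟩ | ⟨h, _⟩
    · rw [h]
    · rw [h]
      rw [show v - -a * x = v + a * x by ring, show v + -a * x = v - a * x by ring]
      exact add_comm _ _
  -- W properties
  have hW_nonneg : ∀ v, 0 ≤ W v := by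
    intro v
    simp only [hWdef, Set.indicator_apply]
    split
    · exact hV_nonneg v (le_of_lt (by assumption))
    · exact le_refl 0
  have hW0 : ∀ v : ℝ, v ≤ 0 → W v = 0 := by
    intro v hv
    simp only [hWdef]
    exact Set.indicator_of_notMem (by simpa using not_lt.mpr hv) V
  have hW_mono : ∀ v w : ℝ, 0 ≤ v → v ≤ w → W v ≤ W w := by
    intro v w hv hvw
    rcases lt_or_ge 0 v with h | h
    · have hw : 0 < w := lt_of_lt_of_le h hvw
      simp only [hWdef, Set.indicator_of_mem (Set.mem_Ioi.mpr h),
        Set.indicator_of_mem (Set.mem_Ioi.mpr hw)]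
      exact hV_mono (Set.mem_Ici.mpr hv) (Set.mem_Ici.mpr (le_trans hv hvw)) hvw
    · have hv0 : v = 0 := le_antisymm h hv
      rw [hW0 v (le_of_eq hv0)]
      exact hW_nonneg w
  -- g properties
  have hg_meas : Measurable g := by
    simp only [hgdef]
    exact Real.measurable_exp.comp ((measurable_id.pow_const 2).neg.div_const _)
  have hg_even : ∀ t, g (-t) = g t := by
    intro t; simp only [hgdef, neg_sq]
  have hg_nonneg : ∀ t, 0 ≤ g t := fun t => (Real.exp_pos _).le
  have hg_anti : ∀ s t : ℝ, |s| ≤ |t| → g t ≤ g s := by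
    intro s t hst
    simp only [hgdef]
    apply Real.exp_le_exp.mpr
    have hsq : s ^ 2 ≤ t ^ 2 := by
      rw [← sq_abs s, ← sq_abs t]
      exact pow_le_pow_left₀ (abs_nonneg s) hst 2
    have h2σ : (0:ℝ) < 2 * σ2 := by linarith
    rw [div_le_div_iff₀ h2σ h2σ]
    nlinarith
  have hW_meas : Measurable W := hV_meas.indicator measurableSet_Ioi
  have hmeas : ∀ α β' : ℝ, AEStronglyMeasurable (fun w => g (w + α) * W (w + β')) volume := by
    intro α β'
    exact ((hg_meas.comp (measurable_id.add_const α)).mul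
      (hW_meas.comp (measurable_id.add_const β'))).aestronglyMeasurable
  -- integrability of the W-form integrand, for s ≥ 0
  have hint : ∀ s : ℝ, Integrable (fun v => (g (v - |a| * s) + g (v + |a| * s)) * W v) := by
    intro s
    have h := (hV_int s).integrable_indicator measurableSet_Ioi
    refine h.congr (Filter.Eventually.of_forall fun v => ?_)
    simp only [hWdef, Set.indicator_apply]
    split
    · rw [hker s v]
    · ring
  -- rewrite set integrals as W-form integrals over ℝ
  have hrw : ∀ s : ℝ,
      (∫ v in Set.Ioi (0:ℝ),
        (Real.exp (-(v - a * s) ^ 2 / (2 * σ2)) + Real.exp (-(v + a * s) ^ 2 / (2 * σ2))) * V v)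
      = ∫ v, (g (v - |a| * s) + g (v + |a| * s)) * W v := by
    intro s
    rw [← integral_indicator measurableSet_Ioi]
    congr 1; funext v
    simp only [hWdef, Set.indicator_apply]
    split
    · exact congrArg (· * V v) (hker s v)
    · ring
  -- main argument
  intro x hx y hy hxy
  simp only
  have hxnn : (0:ℝ) ≤ x := hx
  have hF : (∫ v in Set.Ioi (0:ℝ),
        (Real.exp (-(v - a * x) ^ 2 / (2 * σ2)) + Real.exp (-(v + a * x) ^ 2 / (2 * σ2))) * V v)
      ≤ ∫ v in Set.Ioi (0:ℝ),
        (Real.exp (-(v - a * y) ^ 2 / (2 * σ2)) + Real.exp (-(v + a * y) ^ 2 / (2 * σ2))) * V v := by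
    rw [hrw x, hrw y]
    exact folded_mono_aux g W hg_even hg_anti hg_nonneg hW_nonneg hW0 hW_mono hmeas
      (mul_nonneg (abs_nonneg a) hxnn)
      (mul_le_mul_of_nonneg_left hxy (abs_nonneg a)) (hint x) (hint y)
  have hβp : (0:ℝ) ≤ β * (1 - p) := mul_nonneg hβ0.le (by linarith)
  have := mul_le_mul_of_nonneg_left hF hβp
  linarith
end

section
/- If V : ℝ₊ → ℝ₊ is non-decreasing and measurable with all required integrals finite, then for each a ∈ ℝ, σ > 0, the map x ↦ x² + β ∫_0^∞ [exp(-(v - a x)²/(2σ²)) + exp(-(v + a x)²/(2σ²))] V(v) dv is non-decreasing on [0, ∞), for any β ≥ 0. -/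
/-!
Write `K_m(v) = exp (-(v - m)² / 2σ²) + exp (-(v + m)² / 2σ²)`; since `K_{ax} = K_{|a|x}`, it
suffices to show `m ↦ ∫₀^∞ K_m V` is non-decreasing for `m ≥ 0`. For `0 ≤ c ≤ d` the kernels
`K_c` and `K_d` have the same mass on `(0, ∞)` (a translate of a full Gaussian integral), and the
ratio `K_d / K_c` is non-decreasing (supermodularity of `cosh (v m)`). Hence `K_d - K_c` changes
sign once, from `-` to `+`, at some `v₀`, and
`∫ (K_d - K_c) V = ∫ (K_d - K_c) (V - V v₀) ≥ 0` because both factors have the same sign.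
-/

open MeasureTheory Set Real

theorem setIntegral_mul_le_of_single_crossing {α : Type*} [MeasurableSpace α] [LinearOrder α]
    {μ : Measure α} {s : Set α} (hs : MeasurableSet s) {f g V : α → ℝ} {x₀ : α}
    (hV : MonotoneOn V (insert x₀ s)) (hf : IntegrableOn f s μ) (hg : IntegrableOn g s μ)
    (hfV : IntegrableOn (fun v => f v * V v) s μ) (hgV : IntegrableOn (fun v => g v * V v) s μ)
    (hmass : ∫ v in s, f v ∂μ = ∫ v in s, g v ∂μ)
    (hle : ∀ v ∈ s, v ≤ x₀ → g v ≤ f v) (hge : ∀ v ∈ s, x₀ ≤ v → f v ≤ g v) :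
    ∫ v in s, f v * V v ∂μ ≤ ∫ v in s, g v * V v ∂μ := by
  have hx₀ : x₀ ∈ insert x₀ s := mem_insert x₀ s
  have hnonneg : 0 ≤ ∫ v in s, (g v - f v) * (V v - V x₀) ∂μ := by
    refine setIntegral_nonneg hs fun v hv => ?_
    have hv' : v ∈ insert x₀ s := mem_insert_of_mem x₀ hv
    rcases le_total v x₀ with h | h
    · exact mul_nonneg_of_nonpos_of_nonpos (sub_nonpos.2 (hle v hv h))
        (sub_nonpos.2 (hV hv' hx₀ h))
    · exact mul_nonneg (sub_nonneg.2 (hge v hv h)) (sub_nonneg.2 (hV hx₀ hv' h))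
  have hsplit : ∫ v in s, (g v - f v) * (V v - V x₀) ∂μ
      = (∫ v in s, g v * V v ∂μ - ∫ v in s, f v * V v ∂μ)
        - V x₀ * (∫ v in s, g v ∂μ - ∫ v in s, f v ∂μ) := by
    calc ∫ v in s, (g v - f v) * (V v - V x₀) ∂μ
        = ∫ v in s, ((g v * V v - f v * V v) - V x₀ * (g v - f v)) ∂μ := by
          congr 1 with v
          ring
      _ = _ := by
          rw [integral_sub, integral_sub hgV hfV, integral_const_mul, integral_sub hg hf]
          · exact hgV.sub hfV
          · exact (hg.sub hf).const_mul _
  rw [hsplit, hmass, sub_self, mul_zero, sub_zero, sub_nonneg] at hnonneg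
  exact hnonneg

/-- `(u, c) ↦ cosh (u * c)` is supermodular on the non-negative quadrant. -/
theorem cosh_mul_mul_cosh_mul_le {u v c d : ℝ} (hu : 0 ≤ u) (huv : u ≤ v) (hc : 0 ≤ c)
    (hcd : c ≤ d) : cosh (u * d) * cosh (v * c) ≤ cosh (u * c) * cosh (v * d) := by
  have hv : 0 ≤ v := hu.trans huv
  have hd : 0 ≤ d := hc.trans hcd
  have hprod (x y : ℝ) : cosh x * cosh y = (cosh (x + y) + cosh (x - y)) / 2 := by
    rw [cosh_add, cosh_sub]
    ring
  have hsum : cosh (u * d + v * c) ≤ cosh (u * c + v * d) := by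
    rw [cosh_le_cosh, abs_of_nonneg (by positivity), abs_of_nonneg (by positivity)]
    nlinarith [mul_nonneg (sub_nonneg.2 huv) (sub_nonneg.2 hcd)]
  have hdiff : cosh (u * d - v * c) ≤ cosh (u * c - v * d) := by
    have hcross : u * c ≤ v * d := mul_le_mul huv hcd hc hv
    rw [cosh_le_cosh, abs_sub_comm (u * c), abs_of_nonneg (sub_nonneg.2 hcross), abs_le]
    constructor <;> nlinarith
  rw [hprod, hprod]
  linarith

/-- The folded Gaussian kernel `φ(v, m, σ²)`, without its normalising constant. -/
noncomputable def foldedKernel (σ m v : ℝ) : ℝ :=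
  exp (-(v - m) ^ 2 / (2 * σ ^ 2)) + exp (-(v + m) ^ 2 / (2 * σ ^ 2))

theorem foldedKernel_pos (σ m v : ℝ) : 0 < foldedKernel σ m v := by
  unfold foldedKernel
  positivity

theorem continuous_foldedKernel (σ m : ℝ) : Continuous (foldedKernel σ m) := by
  unfold foldedKernel
  fun_prop

theorem foldedKernel_abs (σ m : ℝ) : foldedKernel σ |m| = foldedKernel σ m := by
  funext v
  rcases abs_choice m with h | h <;> rw [h]
  rw [foldedKernel, foldedKernel, sub_neg_eq_add, ← sub_eq_add_neg, add_comm]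

theorem foldedKernel_apply_zero (σ m : ℝ) :
    foldedKernel σ m 0 = 2 * exp (-m ^ 2 / (2 * σ ^ 2)) := by
  rw [foldedKernel, zero_sub, zero_add, neg_sq]
  ring

section foldedKernel

variable {σ : ℝ}

theorem foldedKernel_eq_cosh (hσ : σ ≠ 0) (m v : ℝ) :
    foldedKernel σ m v
      = 2 * exp (-v ^ 2 / (2 * σ ^ 2)) * exp (-m ^ 2 / (2 * σ ^ 2)) * cosh (v * (m / σ ^ 2)) := by
  have hsub : -(v - m) ^ 2 / (2 * σ ^ 2)
      = -v ^ 2 / (2 * σ ^ 2) + -m ^ 2 / (2 * σ ^ 2) + v * (m / σ ^ 2) := by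
    field_simp
    ring
  have hadd : -(v + m) ^ 2 / (2 * σ ^ 2)
      = -v ^ 2 / (2 * σ ^ 2) + -m ^ 2 / (2 * σ ^ 2) + -(v * (m / σ ^ 2)) := by
    field_simp
    ring
  rw [foldedKernel, hsub, hadd, cosh_eq]
  simp only [exp_add]
  ring

theorem integrable_exp_neg_sq_div (hσ : σ ≠ 0) :
    Integrable fun u : ℝ => exp (-u ^ 2 / (2 * σ ^ 2)) := by
  have h := integrable_exp_neg_mul_sq (b := 1 / (2 * σ ^ 2)) (by positivity)
  refine h.congr (Filter.Eventually.of_forall fun u => ?_)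
  simp only
  ring_nf

theorem integrable_foldedKernel (hσ : σ ≠ 0) (m : ℝ) : Integrable (foldedKernel σ m) :=
  ((integrable_exp_neg_sq_div hσ).comp_sub_right m).add
    ((integrable_exp_neg_sq_div hσ).comp_add_right m)

theorem setIntegral_foldedKernel_Ioi (hσ : σ ≠ 0) (m : ℝ) :
    ∫ v in Ioi 0, foldedKernel σ m v = ∫ u, exp (-u ^ 2 / (2 * σ ^ 2)) := by
  set g : ℝ → ℝ := fun u => exp (-u ^ 2 / (2 * σ ^ 2))
  have hg : Integrable g := integrable_exp_neg_sq_div hσ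
  have hg_neg (u : ℝ) : g (-u) = g u := by simp only [g, neg_sq]
  have hreflect : ∫ v in Ioi 0, g (v + m) = ∫ v in Iic 0, g (v - m) := by
    simpa only [neg_zero, ← neg_add', hg_neg] using integral_comp_neg_Ioi 0 fun v => g (v - m)
  calc ∫ v in Ioi 0, foldedKernel σ m v
      = ∫ v in Ioi 0, (g (v - m) + g (v + m)) := rfl
    _ = (∫ v in Ioi 0, g (v - m)) + ∫ v in Ioi 0, g (v + m) :=
        integral_add (hg.comp_sub_right m).integrableOn (hg.comp_add_right m).integrableOn
    _ = ∫ v, g (v - m) := by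
        rw [hreflect]
        exact (add_comm _ _).trans (intervalIntegral.integral_Iic_add_Ioi
          (hg.comp_sub_right m).integrableOn (hg.comp_sub_right m).integrableOn)
    _ = ∫ u, g u := integral_sub_right_eq_self g m

/-- Monotone likelihood ratio property of the folded Gaussian family. -/
theorem monotoneOn_foldedKernel_div (hσ : σ ≠ 0) {c d : ℝ} (hc : 0 ≤ c) (hcd : c ≤ d) :
    MonotoneOn (fun v => foldedKernel σ d v / foldedKernel σ c v) (Ici 0) := by
  intro u hu v _ huv
  rw [div_le_div_iff₀ (foldedKernel_pos σ c u) (foldedKernel_pos σ c v)]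
  simp only [foldedKernel_eq_cosh hσ]
  set E : ℝ → ℝ := fun t => exp (-t ^ 2 / (2 * σ ^ 2))
  have hcosh := cosh_mul_mul_cosh_mul_le (c := c / σ ^ 2) (d := d / σ ^ 2) hu huv
    (by positivity) (by gcongr)
  calc 2 * E u * E d * cosh (u * (d / σ ^ 2)) * (2 * E v * E c * cosh (v * (c / σ ^ 2)))
      = 4 * E u * E v * E c * E d * (cosh (u * (d / σ ^ 2)) * cosh (v * (c / σ ^ 2))) := by ring
    _ ≤ 4 * E u * E v * E c * E d * (cosh (u * (c / σ ^ 2)) * cosh (v * (d / σ ^ 2))) := by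
        gcongr
    _ = 2 * E v * E d * cosh (v * (d / σ ^ 2)) * (2 * E u * E c * cosh (u * (c / σ ^ 2))) := by ring

/-- Two kernels of equal mass must cross. -/
theorem exists_foldedKernel_eq (hσ : σ ≠ 0) {c d : ℝ} (hcd : c ^ 2 ≤ d ^ 2) :
    ∃ v₀ ∈ Ici (0 : ℝ), foldedKernel σ d v₀ = foldedKernel σ c v₀ := by
  obtain ⟨v₁, hv₁, hcross⟩ : ∃ v₁ ∈ Ici (0 : ℝ), foldedKernel σ c v₁ ≤ foldedKernel σ d v₁ := by
    by_contra! hlt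
    have hpos : 0 < ∫ v in Ioi 0, (foldedKernel σ c v - foldedKernel σ d v) := by
      have hint : IntegrableOn (fun v => foldedKernel σ c v - foldedKernel σ d v) (Ioi 0) :=
        ((integrable_foldedKernel hσ c).sub (integrable_foldedKernel hσ d)).integrableOn
      have hsupp :
          Function.support (fun v => foldedKernel σ c v - foldedKernel σ d v) ∩ Ioi 0 = Ioi 0 :=
        inter_eq_self_of_subset_right fun v hv => (sub_pos.2 (hlt v (Ioi_subset_Ici_self hv))).ne'
      rw [setIntegral_pos_iff_support_of_nonneg_ae _ hint, hsupp]
      · exact isOpen_Ioi.measure_pos volume nonempty_Ioi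
      · exact (ae_restrict_iff' measurableSet_Ioi).2 (Filter.Eventually.of_forall
          fun v hv => (sub_pos.2 (hlt v (Ioi_subset_Ici_self hv))).le)
    rw [integral_sub (integrable_foldedKernel hσ c).integrableOn
      (integrable_foldedKernel hσ d).integrableOn, setIntegral_foldedKernel_Ioi hσ,
      setIntegral_foldedKernel_Ioi hσ, sub_self] at hpos
    exact hpos.false
  have hstart : foldedKernel σ d 0 ≤ foldedKernel σ c 0 := by
    rw [foldedKernel_apply_zero, foldedKernel_apply_zero]
    gcongr
  obtain ⟨v₀, hv₀, heq⟩ := intermediate_value_Icc hv₁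
    ((continuous_foldedKernel σ d).sub (continuous_foldedKernel σ c)).continuousOn
    ⟨sub_nonpos.2 hstart, sub_nonneg.2 hcross⟩
  exact ⟨v₀, hv₀.1, sub_eq_zero.1 heq⟩

theorem setIntegral_foldedKernel_mul_le (hσ : σ ≠ 0) {V : ℝ → ℝ} (hV : MonotoneOn V (Ici 0))
    {c d : ℝ} (hc : 0 ≤ c) (hcd : c ≤ d)
    (hcV : IntegrableOn (fun v => foldedKernel σ c v * V v) (Ioi 0))
    (hdV : IntegrableOn (fun v => foldedKernel σ d v * V v) (Ioi 0)) :
    ∫ v in Ioi 0, foldedKernel σ c v * V v ≤ ∫ v in Ioi 0, foldedKernel σ d v * V v := by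
  obtain ⟨v₀, hv₀, hcross⟩ := exists_foldedKernel_eq hσ (pow_le_pow_left₀ hc hcd 2)
  have hratio := monotoneOn_foldedKernel_div hσ hc hcd
  have hratio₀ : foldedKernel σ d v₀ / foldedKernel σ c v₀ = 1 := by
    rw [hcross, div_self (foldedKernel_pos σ c v₀).ne']
  refine setIntegral_mul_le_of_single_crossing measurableSet_Ioi
    (hV.mono (insert_subset hv₀ Ioi_subset_Ici_self)) (integrable_foldedKernel hσ c).integrableOn
    (integrable_foldedKernel hσ d).integrableOn hcV hdV
    (by rw [setIntegral_foldedKernel_Ioi hσ, setIntegral_foldedKernel_Ioi hσ]) ?_ ?_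
  · intro v hv hvv₀
    rw [← div_le_one (foldedKernel_pos σ c v), ← hratio₀]
    exact hratio (Ioi_subset_Ici_self hv) hv₀ hvv₀
  · intro v hv hv₀v
    rw [← one_le_div (foldedKernel_pos σ c v), ← hratio₀]
    exact hratio hv₀ (Ioi_subset_Ici_self hv) hv₀v

end foldedKernel

theorem stmt_13_general (a σ : ℝ) (hσ : 0 < σ) (β : ℝ) (hβ : 0 ≤ β)
    (V : ℝ → ℝ) (hV_mono : MonotoneOn V (Set.Ici 0))
    (hV_int : ∀ s : ℝ, IntegrableOn
      (fun v => (Real.exp (-(v - a * s) ^ 2 / (2 * σ ^ 2)) + Real.exp (-(v + a * s) ^ 2 / (2 * σ ^ 2))) * V v)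
      (Set.Ioi 0)) :
    MonotoneOn (fun x => x ^ 2 + β *
      ∫ v in Set.Ioi (0:ℝ),
        (Real.exp (-(v - a * x) ^ 2 / (2 * σ ^ 2)) + Real.exp (-(v + a * x) ^ 2 / (2 * σ ^ 2))) * V v)
      (Set.Ici 0) := by
  have habs (s : ℝ) (hs : 0 ≤ s) : foldedKernel σ (a * s) = foldedKernel σ (|a| * s) := by
    rw [← abs_of_nonneg hs, ← abs_mul, foldedKernel_abs, abs_of_nonneg hs]
  intro x hx y hy hxy
  rw [mem_Ici] at hx hy
  change x ^ 2 + β * ∫ v in Ioi 0, foldedKernel σ (a * x) v * V v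
    ≤ y ^ 2 + β * ∫ v in Ioi 0, foldedKernel σ (a * y) v * V v
  have hint (s : ℝ) (hs : 0 ≤ s) :
      IntegrableOn (fun v => foldedKernel σ (|a| * s) v * V v) (Ioi 0) :=
    habs s hs ▸ hV_int s
  rw [habs x hx, habs y hy]
  have hF := setIntegral_foldedKernel_mul_le hσ.ne' hV_mono (by positivity)
    (mul_le_mul_of_nonneg_left hxy (abs_nonneg a)) (hint x hx) (hint y hy)
  gcongr

/-- The one-step folded Bellman update `x ↦ x² + β·F(x)` of a non-decreasing non-negative value
function is non-decreasing on `[0, ∞)`. -/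
theorem stmt_13 (a σ : ℝ) (hσ : 0 < σ) (β : ℝ) (hβ : 0 ≤ β)
    (V : ℝ → ℝ) (hV_meas : Measurable V) (hV_nonneg : ∀ v, 0 ≤ v → 0 ≤ V v)
    (hV_mono : MonotoneOn V (Set.Ici 0))
    (hV_int : ∀ s : ℝ, IntegrableOn
      (fun v => (Real.exp (-(v - a * s) ^ 2 / (2 * σ ^ 2)) + Real.exp (-(v + a * s) ^ 2 / (2 * σ ^ 2))) * V v)
      (Set.Ioi 0)) :
    MonotoneOn (fun x => x ^ 2 + β *
      ∫ v in Set.Ioi (0:ℝ),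
        (Real.exp (-(v - a * x) ^ 2 / (2 * σ ^ 2)) + Real.exp (-(v + a * x) ^ 2 / (2 * σ ^ 2))) * V v)
      (Set.Ici 0) :=
  stmt_13_general a σ hσ β hβ V hV_mono hV_int
end
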